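/- Let A be an anti-flexible algebra and V a vector space with linear maps ▷: A⊗V→V, ◁: V⊗A→V, θ: A⊗A→V and a bilinear multiplication on V. Then E = A⊕V with multiplication (a,x)(b,y) = (ab, xy + x◁b + a▷y + θ(a,b)) is an anti-flexible algebra if and only if for all a,b,c in A and x,y,z in V: (A1) (xy)◁a + a▷(yx) = x(y◁a) + (a▷y)x; (A2) (x◁a)y − x(a▷y) = (y◁a)x − y(a▷x); (A3) (ab)▷x + θ(a,b)x − a▷(b▷x) = (x◁b)◁a − x θ(b,a) − x◁(ba); (A4) (a▷x)◁b − a▷(x◁b) = (b▷x)◁a − b▷(x◁a); (A5) θ(ab,c) − θ(a,bc) + θ(a,b)◁c − a▷θ(b,c) = θ(cb,a) − θ(c,ba) + θ(c,b)◁a − c▷θ(b,a); (A6) (xy)z − x(yz) = (zy)x − z(yx). -/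
import Mathlib


open TensorProduct LinearMap

namespace AntiFlexible

section Basic

variable (K : Type*) [Field K] [CharZero K]
variable (M N P : Type*)
variable [AddCommGroup M] [Module K M] [AddCommGroup N] [Module K N] [AddCommGroup P] [Module K P]

/-- The flip map `τ : M ⊗ N → N ⊗ M`. -/
noncomputable def τ : M ⊗[K] N →ₗ[K] N ⊗[K] M := (TensorProduct.comm K M N).toLinearMap

/-- `τ₁₃ : (M ⊗ N) ⊗ P → (P ⊗ N) ⊗ M`, exchanging the outer tensor factors. -/
noncomputable def τ₁₃ : (M ⊗[K] N) ⊗[K] P →ₗ[K] (P ⊗[K] N) ⊗[K] M :=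
  (TensorProduct.assoc K P N M).symm.toLinearMap ∘ₗ
    (lTensor P (τ K M N)) ∘ₗ (TensorProduct.comm K (M ⊗[K] N) P).toLinearMap

/-- The reassociator `M ⊗ (N ⊗ P) → (M ⊗ N) ⊗ P`. -/
noncomputable def α : M ⊗[K] (N ⊗[K] P) →ₗ[K] (M ⊗[K] N) ⊗[K] P :=
  (TensorProduct.assoc K M N P).symm.toLinearMap

/-- The antisymmetrizer `id - τ` on `M ⊗ M`. -/
noncomputable def ω : M ⊗[K] M →ₗ[K] M ⊗[K] M := LinearMap.id - τ K M M

end Basic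

section Structures

variable {K : Type*} [Field K] [CharZero K]
variable {A H V : Type*}
variable [AddCommGroup A] [Module K A] [AddCommGroup H] [Module K H]
variable [AddCommGroup V] [Module K V]

/-- Anti-flexible algebra: `(ab)c - a(bc) = (cb)a - c(ba)`. -/
def IsAFAlgebra (m : A →ₗ[K] A →ₗ[K] A) : Prop :=
  ∀ a b c, m (m a b) c - m a (m b c) = m (m c b) a - m c (m b a)

/-- The coassociativity defect `(Δ ⊗ id)Δ - (id ⊗ Δ)Δ`, viewed in `(A ⊗ A) ⊗ A`. -/
noncomputable def coassocDefect (Δ : A →ₗ[K] A ⊗[K] A) : A →ₗ[K] (A ⊗[K] A) ⊗[K] A :=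
  (rTensor A Δ) ∘ₗ Δ - (α K A A A) ∘ₗ (lTensor A Δ) ∘ₗ Δ

/-- Anti-flexible coalgebra: the coassociativity defect is `τ₁₃`-invariant. -/
def IsAFCoalgebra (Δ : A →ₗ[K] A ⊗[K] A) : Prop :=
  ∀ a, coassocDefect Δ a = τ₁₃ K A A A (coassocDefect Δ a)

/-- Anti-flexible bialgebra. -/
def IsAFBialgebra (m : A →ₗ[K] A →ₗ[K] A) (Δ : A →ₗ[K] A ⊗[K] A) : Prop :=
  IsAFAlgebra m ∧ IsAFCoalgebra Δ ∧
  (∀ a b, Δ (m a b) + τ K A A (Δ (m b a)) =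
      rTensor A (m b) (τ K A A (Δ a)) + lTensor A (m.flip a) (τ K A A (Δ b))
      + rTensor A (m.flip b) (Δ a) + lTensor A (m a) (Δ b)) ∧
  (∀ a b, ω K A (lTensor A (m.flip b) (Δ a) - rTensor A (m b) (Δ a)
      - lTensor A (m.flip a) (Δ b) + rTensor A (m a) (Δ b)) = 0)

/-- `V` is a bimodule over the anti-flexible algebra `(H, m)` via `tr = ▷` and `tl = ◁`. -/
def IsAFBimodule (m : H →ₗ[K] H →ₗ[K] H)
    (tr : H →ₗ[K] V →ₗ[K] V) (tl : V →ₗ[K] H →ₗ[K] V) : Prop :=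
  (∀ x y v, tr (m x y) v - tr x (tr y v) = tl (tl v y) x - tl v (m y x)) ∧
  (∀ x y v, tl (tr x v) y - tr x (tl v y) = tl (tr y v) x - tr y (tl v x))

/-- `V` is a bicomodule over the anti-flexible coalgebra `(H, Δ)` via `φ` and `ψ`. -/
def IsAFBicomodule (Δ : H →ₗ[K] H ⊗[K] H)
    (φ : V →ₗ[K] H ⊗[K] V) (ψ : V →ₗ[K] V ⊗[K] H) : Prop :=
  (∀ v, rTensor V Δ (φ v) - α K H H V (lTensor H φ (φ v))
      = τ₁₃ K V H H (rTensor H ψ (ψ v) - α K V H H (lTensor V Δ (ψ v)))) ∧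
  (∀ v, rTensor H φ (ψ v) - α K H V H (lTensor H ψ (φ v))
      = τ₁₃ K H V H (rTensor H φ (ψ v) - α K H V H (lTensor H ψ (φ v))))

/-- Anti-flexible Hopf bimodule over `(H, m, Δ)`, with conditions (HM1)-(HM3). -/
def IsAFHopfBimodule (m : H →ₗ[K] H →ₗ[K] H) (Δ : H →ₗ[K] H ⊗[K] H)
    (tr : H →ₗ[K] V →ₗ[K] V) (tl : V →ₗ[K] H →ₗ[K] V)
    (φ : V →ₗ[K] H ⊗[K] V) (ψ : V →ₗ[K] V ⊗[K] H) : Prop :=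
  IsAFBimodule m tr tl ∧ IsAFBicomodule Δ φ ψ ∧
  -- (HM1)
  (∀ x v, φ (tr x v) + τ K V H (ψ (tl v x))
      = lTensor H (tr x) (φ v) + lTensor H (tl.flip x) (τ K V H (ψ v))) ∧
  -- (HM2)
  (∀ x v, ψ (tr x v) + τ K H V (φ (tl v x))
      = rTensor H (tr.flip v) (Δ x) + lTensor V (m x) (ψ v)
      + lTensor V (m.flip x) (τ K H V (φ v)) + rTensor H (tl v) (τ K H H (Δ x))) ∧
  -- (HM3)
  (∀ x v, rTensor H (tr x) (ψ v) - rTensor H (tl v) (Δ x) - lTensor V (m.flip x) (ψ v)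
      = τ K H V (- lTensor H (tl.flip x) (φ v) + rTensor V (m x) (φ v)
        + lTensor H (tr.flip v) (Δ x)))

/-- `A` is a braided anti-flexible bialgebra over `(H, mH, ΔH)`:
an anti-flexible algebra and coalgebra in the category of anti-flexible Hopf bimodules,
satisfying (BB1) and (BB2). -/
def IsBraidedAFBialgebra (mA : A →ₗ[K] A →ₗ[K] A) (ΔA : A →ₗ[K] A ⊗[K] A)
    (mH : H →ₗ[K] H →ₗ[K] H) (ΔH : H →ₗ[K] H ⊗[K] H)
    (tr : H →ₗ[K] A →ₗ[K] A) (tl : A →ₗ[K] H →ₗ[K] A)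
    (φ : A →ₗ[K] H ⊗[K] A) (ψ : A →ₗ[K] A ⊗[K] H) : Prop :=
  IsAFAlgebra mA ∧ IsAFCoalgebra ΔA ∧
  IsAFHopfBimodule mH ΔH tr tl φ ψ ∧
  -- H-bimodule algebra
  (∀ x a b, mA (tr x a) b - tr x (mA a b) = tl (mA b a) x - mA b (tl a x)) ∧
  (∀ x a b, mA a (tr x b) - mA (tl a x) b = mA b (tr x a) - mA (tl b x) a) ∧
  -- H-bimodule coalgebra
  (∀ x b, ΔA (tr x b) + τ K A A (ΔA (tl b x))
      = lTensor A (tl.flip x) (τ K A A (ΔA b)) + lTensor A (tr x) (ΔA b)) ∧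
  (∀ x b, ω K A (rTensor A (tr x) (ΔA b) - lTensor A (tl.flip x) (ΔA b)) = 0) ∧
  -- H-bicomodule algebra
  (∀ a b, φ (mA a b) + τ K A H (ψ (mA b a))
      = lTensor H (mA a) (φ b) + lTensor H (mA.flip a) (τ K A H (ψ b))) ∧
  (∀ a b, lTensor H (mA.flip b) (φ a) - lTensor H (mA.flip a) (φ b)
      = τ K A H (rTensor H (mA a) (ψ b) - rTensor H (mA b) (ψ a))) ∧
  -- H-bicomodule coalgebra
  (∀ a, rTensor A φ (ΔA a) - α K H A A (lTensor H ΔA (φ a))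
      = τ₁₃ K A A H (rTensor H ΔA (ψ a) - α K A A H (lTensor A ψ (ΔA a)))) ∧
  (∀ a, rTensor A ψ (ΔA a) - α K A H A (lTensor A φ (ΔA a))
      = τ₁₃ K A H A (rTensor A ψ (ΔA a) - α K A H A (lTensor A φ (ΔA a)))) ∧
  -- (BB1)
  (∀ a b, ΔA (mA a b) + τ K A A (ΔA (mA b a))
      = rTensor A (mA.flip b) (ΔA a) + rTensor A (mA b) (τ K A A (ΔA a))
      + lTensor A (mA a) (ΔA b) + lTensor A (mA.flip a) (τ K A A (ΔA b))
      + rTensor A (tr.flip b) (φ a) + rTensor A (tl b) (τ K A H (ψ a))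
      + lTensor A (tl a) (ψ b) + lTensor A (tr.flip a) (τ K H A (φ b))) ∧
  -- (BB2)
  (∀ a b, ω K A (lTensor A (mA.flip b) (ΔA a) - rTensor A (mA b) (ΔA a)
        - lTensor A (mA.flip a) (ΔA b) + rTensor A (mA a) (ΔA b))
      + ω K A (lTensor A (tr.flip b) (ψ a) - rTensor A (tl b) (φ a)
        - lTensor A (tr.flip a) (ψ b) + rTensor A (tl a) (φ b)) = 0)

/-- The (cocycle) cross product multiplication on `A × H`:
`(a,x)(b,y) = (ab + x⇀b + a↼y + σ(x,y), xy + x◁b + a▷y + θ(a,b))`,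
where `tr = ⇀`, `tl = ↼`, `sr = ▷`, `sl = ◁`. -/
noncomputable def prodMul (mA : A →ₗ[K] A →ₗ[K] A) (mH : H →ₗ[K] H →ₗ[K] H)
    (tr : H →ₗ[K] A →ₗ[K] A) (tl : A →ₗ[K] H →ₗ[K] A)
    (sr : A →ₗ[K] H →ₗ[K] H) (sl : H →ₗ[K] A →ₗ[K] H)
    (σ : H →ₗ[K] H →ₗ[K] A) (θ : A →ₗ[K] A →ₗ[K] H) :
    (A × H) →ₗ[K] (A × H) →ₗ[K] (A × H) :=
  ((mA ∘ₗ fst K A H).compl₂ (fst K A H) + (tr ∘ₗ snd K A H).compl₂ (fst K A H)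
    + (tl ∘ₗ fst K A H).compl₂ (snd K A H)
    + (σ ∘ₗ snd K A H).compl₂ (snd K A H)).compr₂ (inl K A H)
  + ((mH ∘ₗ snd K A H).compl₂ (snd K A H) + (sl ∘ₗ snd K A H).compl₂ (fst K A H)
    + (sr ∘ₗ fst K A H).compl₂ (snd K A H)
    + (θ ∘ₗ fst K A H).compl₂ (fst K A H)).compr₂ (inr K A H)

/-- The (cycle) cross coproduct comultiplication on `A × H`:
`Δ(a) = Δ_A(a) + φ(a) + ψ(a) + P(a)` and `Δ(x) = Δ_H(x) + ρ(x) + γ(x) + Q(x)`. -/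
noncomputable def prodComul (ΔA : A →ₗ[K] A ⊗[K] A) (ΔH : H →ₗ[K] H ⊗[K] H)
    (φ : A →ₗ[K] H ⊗[K] A) (ψ : A →ₗ[K] A ⊗[K] H)
    (ρ : H →ₗ[K] A ⊗[K] H) (γ : H →ₗ[K] H ⊗[K] A)
    (P : A →ₗ[K] H ⊗[K] H) (Q : H →ₗ[K] A ⊗[K] A) :
    (A × H) →ₗ[K] (A × H) ⊗[K] (A × H) :=
  (TensorProduct.map (inl K A H) (inl K A H)) ∘ₗ ΔA ∘ₗ fst K A H
  + (TensorProduct.map (inr K A H) (inl K A H)) ∘ₗ φ ∘ₗ fst K A H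
  + (TensorProduct.map (inl K A H) (inr K A H)) ∘ₗ ψ ∘ₗ fst K A H
  + (TensorProduct.map (inr K A H) (inr K A H)) ∘ₗ P ∘ₗ fst K A H
  + (TensorProduct.map (inr K A H) (inr K A H)) ∘ₗ ΔH ∘ₗ snd K A H
  + (TensorProduct.map (inl K A H) (inr K A H)) ∘ₗ ρ ∘ₗ snd K A H
  + (TensorProduct.map (inr K A H) (inl K A H)) ∘ₗ γ ∘ₗ snd K A H
  + (TensorProduct.map (inl K A H) (inl K A H)) ∘ₗ Q ∘ₗ snd K A H

/-- The linear map `(a, x) ↦ (a + r(x), s(x))` on `A × V`. -/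
noncomputable def phiRS (r : V →ₗ[K] A) (s : V →ₗ[K] V) : (A × V) →ₗ[K] (A × V) :=
  (fst K A V + r ∘ₗ snd K A V).prod (s ∘ₗ snd K A V)

end Structures

end AntiFlexible

open AntiFlexible

/-- the type (a1) unified product `A #_θ V`, with multiplication
`(a,x)(b,y) = (ab, xy + x◁b + a▷y + θ(a,b))`, is an anti-flexible algebra iff
conditions (A1)-(A6) hold.  Here `sr = ▷ : A⊗V→V`, `sl = ◁ : V⊗A→V`. -/

lemma prodMul_a1_apply
    {K A V : Type*} [Field K] [CharZero K]
    [AddCommGroup A] [Module K A] [AddCommGroup V] [Module K V]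
    (mA : A →ₗ[K] A →ₗ[K] A)
    (sr : A →ₗ[K] V →ₗ[K] V) (sl : V →ₗ[K] A →ₗ[K] V)
    (θ : A →ₗ[K] A →ₗ[K] V) (mV : V →ₗ[K] V →ₗ[K] V)
    (a b : A) (x y : V) :
    prodMul mA mV 0 0 sr sl 0 θ (a, x) (b, y)
      = (mA a b, mV x y + sl x b + sr a y + θ a b) := by
  simp [prodMul]

theorem unified_product_a1_iff
    (K A V : Type*) [Field K] [CharZero K]
    [AddCommGroup A] [Module K A] [AddCommGroup V] [Module K V]
    (mA : A →ₗ[K] A →ₗ[K] A)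
    (sr : A →ₗ[K] V →ₗ[K] V) (sl : V →ₗ[K] A →ₗ[K] V)
    (θ : A →ₗ[K] A →ₗ[K] V) (mV : V →ₗ[K] V →ₗ[K] V)
    (hA : IsAFAlgebra mA) :
    IsAFAlgebra (prodMul mA mV 0 0 sr sl 0 θ)
      ↔
      -- (A1)
      ((∀ (x y : V) (a : A),
        sl (mV x y) a + sr a (mV y x) = mV x (sl y a) + mV (sr a y) x) ∧
      -- (A2)
      (∀ (x y : V) (a : A),
        mV (sl x a) y - mV x (sr a y) = mV (sl y a) x - mV y (sr a x)) ∧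
      -- (A3)
      (∀ (a b : A) (x : V),
        sr (mA a b) x + mV (θ a b) x - sr a (sr b x)
          = sl (sl x b) a - mV x (θ b a) - sl x (mA b a)) ∧
      -- (A4)
      (∀ (a b : A) (x : V),
        sl (sr a x) b - sr a (sl x b) = sl (sr b x) a - sr b (sl x a)) ∧
      -- (A5)
      (∀ a b c : A,
        θ (mA a b) c - θ a (mA b c) + sl (θ a b) c - sr a (θ b c)
          = θ (mA c b) a - θ c (mA b a) + sl (θ c b) a - sr c (θ b a)) ∧
      -- (A6)
      (∀ x y z : V,
        mV (mV x y) z - mV x (mV y z) = mV (mV z y) x - mV z (mV y x))) := by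
  constructor
  · intro h
    refine ⟨?_, ?_, ?_, ?_, ?_, ?_⟩
    · intro x y a
      have H := h (0, x) (0, y) (a, 0)
      simp only [prodMul_a1_apply, map_zero, LinearMap.zero_apply, add_zero, zero_add,
        Prod.mk_sub_mk, Prod.mk.injEq, sub_zero] at H
      linear_combination (norm := module) H.2
    · intro x y a
      have H := h (0, x) (a, 0) (0, y)
      simp only [prodMul_a1_apply, map_zero, LinearMap.zero_apply, add_zero, zero_add,
        Prod.mk_sub_mk, Prod.mk.injEq, sub_zero] at H
      linear_combination (norm := module) H.2
    · intro a b x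
      have H := h (a, 0) (b, 0) (0, x)
      simp only [prodMul_a1_apply, map_zero, LinearMap.zero_apply, add_zero, zero_add,
        Prod.mk_sub_mk, Prod.mk.injEq, sub_zero] at H
      linear_combination (norm := module) H.2
    · intro a b x
      have H := h (a, 0) (0, x) (b, 0)
      simp only [prodMul_a1_apply, map_zero, LinearMap.zero_apply, add_zero, zero_add,
        Prod.mk_sub_mk, Prod.mk.injEq, sub_zero] at H
      linear_combination (norm := module) H.2
    · intro a b c
      have H := h (a, 0) (b, 0) (c, 0)
      simp only [prodMul_a1_apply, map_zero, LinearMap.zero_apply, add_zero, zero_add,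
        Prod.mk_sub_mk, Prod.mk.injEq, sub_zero] at H
      linear_combination (norm := module) H.2
    · intro x y z
      have H := h (0, x) (0, y) (0, z)
      simp only [prodMul_a1_apply, map_zero, LinearMap.zero_apply, add_zero, zero_add,
        Prod.mk_sub_mk, Prod.mk.injEq, sub_zero] at H
      linear_combination (norm := module) H.2
  · rintro ⟨h1, h2, h3, h4, h5, h6⟩ ⟨a, x⟩ ⟨b, y⟩ ⟨c, z⟩
    simp only [prodMul_a1_apply, map_add, LinearMap.add_apply, Prod.mk_sub_mk,
      Prod.mk.injEq]
    refine ⟨hA a b c, ?_⟩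
    linear_combination (norm := module) h5 a b c + h3 a b z - h3 c b x + h4 a c y
      + h1 x y c - h1 z y a + h2 x z b + h6 x y z
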